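/- Let g = L_{5,3} (nonzero brackets [e1,e2]=e3, [e1,e3]=e4) and let g_R = g ⊕ ℝ with bracket [(ξ,r),(η,k)] = ([ξ,η],0), with 1* ∈ g_R* the projection onto the ℝ-summand and e^1,…,e^5 the dual basis of g* (extended by zero on the ℝ-summand). Then the 2-form ω := e^1 ∧ e^3 − 1* ∧ e^4 ∈ Λ^2 g_R* satisfies Dω = 0, where D = δ + 1*∧ and δ is the Chevalley–Eilenberg differential of g_R. -/

import Mathlib

/-! Since `δ e¹ = δ 1* = 0`, `δ e³ = -e¹ ∧ e²` and `δ e⁴ = -e¹ ∧ e³`, the Leibniz rule gives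
`δ ω = -1* ∧ e¹ ∧ e³`, while `1* ∧ ω = 1* ∧ e¹ ∧ e³` because `1* ∧ 1* = 0`. Instead of developing
the Leibniz rule, both sides are evaluated on three vectors: wedge products by the shuffle formula,
`δ` by the Koszul formula, which leaves a polynomial identity in the coordinates. -/

set_option linter.unnecessarySeqFocus false

noncomputable section

/-- The wedge product of two scalar-valued alternating forms. -/
def wedge {R M : Type*} [CommRing R] [AddCommGroup M] [Module R M] {m n : ℕ}
    (α : M [⋀^Fin m]→ₗ[R] R) (β : M [⋀^Fin n]→ₗ[R] R) : M [⋀^Fin (m + n)]→ₗ[R] R :=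
  (LinearMap.mul' R R).compAlternatingMap ((α.domCoprod β).domDomCongr finSumFinEquiv)

/-- Reindexing of an alternating form along an equality of degrees. -/
def castForm {R M : Type*} [CommRing R] [AddCommGroup M] [Module R M] {m n : ℕ}
    (h : m = n) (α : M [⋀^Fin m]→ₗ[R] R) : M [⋀^Fin n]→ₗ[R] R :=
  α.domDomCongr (finCongr h)

/-- A linear functional, viewed as a `1`-form. -/
def oneForm {R M : Type*} [CommRing R] [AddCommGroup M] [Module R M]
    (f : M →ₗ[R] R) : M [⋀^Fin 1]→ₗ[R] R :=
  AlternatingMap.ofSubsingleton R M R 0 f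


/-- The argument tuple `([x_i,x_j], x_0, …, x̂_i, …, x̂_j, …, x_m)` appearing in the Koszul
formula for the Chevalley–Eilenberg differential (only relevant when `i < j`). -/
def kosArg {W : Type*} [LieRing W] {m : ℕ} (v : Fin (m + 1) → W) (i j : Fin (m + 1)) :
    Fin m → W := fun k =>
  if hk : (k : ℕ) = 0 then ⁅v i, v j⁆
  else
    v ⟨if (k : ℕ) - 1 < (i : ℕ) then (k : ℕ) - 1
       else if (k : ℕ) < (j : ℕ) then (k : ℕ) else (k : ℕ) + 1,
      by have := k.isLt; have := i.isLt; have := j.isLt; split_ifs <;> omega⟩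

/-- `d` is (the degree `m` part of) the Chevalley–Eilenberg differential of `W` with trivial
coefficients, characterized by the Koszul formula
`(δα)(x_0,…,x_m) = Σ_{i<j} (−1)^{i+j} α([x_i,x_j],x_0,…,x̂_i,…,x̂_j,…,x_m)`. -/
def IsCEDiff {R W : Type*} [CommRing R] [LieRing W] [LieAlgebra R W]
    {m : ℕ} (d : (W [⋀^Fin m]→ₗ[R] R) → (W [⋀^Fin (m + 1)]→ₗ[R] R)) : Prop :=
  ∀ (α : W [⋀^Fin m]→ₗ[R] R) (v : Fin (m + 1) → W),
    d α v = ∑ p ∈ Finset.univ.filter (fun p : Fin (m + 1) × Fin (m + 1) => p.1 < p.2),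
      ((-1 : R) ^ ((p.1 : ℕ) + (p.2 : ℕ))) • α (kosArg v p.1 p.2)


section TrivialExtension

variable {R : Type*} [CommRing R] {L : Type*} [LieRing L]

/-- The Lie bracket `[(ξ,r),(η,k)] = ([ξ,η],0)` on the abelian extension `L ⊕ R`. -/
instance instLieRingTrivExt : LieRing (L × R) where
  bracket x y := (⁅x.1, y.1⁆, 0)
  add_lie x y z := by ext <;> simp [add_lie]
  lie_add x y z := by ext <;> simp [lie_add]
  lie_self x := by ext <;> simp
  leibniz_lie x y z := by ext <;> simp

instance instLieAlgebraTrivExt [LieAlgebra R L] : LieAlgebra R (L × R) where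
  lie_smul t x y := by
    show ((⁅x.1, (t • y).1⁆ : L), (0 : R)) = t • (⁅x.1, y.1⁆, (0 : R))
    ext <;> simp

end TrivialExtension


/-- The underlying vector space of the 5-dimensional nilpotent Lie algebra `L53`. -/
def L53 : Type := Fin 5 → ℝ

instance : AddCommGroup L53 := inferInstanceAs (AddCommGroup (Fin 5 → ℝ))
instance : Module ℝ L53 := inferInstanceAs (Module ℝ (Fin 5 → ℝ))

theorem L53.add_apply (x y : L53) (i : Fin 5) : (x + y) i = x i + y i := rfl
theorem L53.smul_apply (t : ℝ) (x : L53) (i : Fin 5) : (t • x) i = t * x i := rfl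

/-- The bracket of `L53`: `[e1,e2] = e3`, `[e1,e3] = e4`. -/
def L53.b (x y : Fin 5 → ℝ) : Fin 5 → ℝ := ![0, 0, x 0 * y 1 - x 1 * y 0, x 0 * y 2 - x 2 * y 0, 0]

instance : LieRing L53 where
  bracket x y := L53.b x y
  add_lie x y z := by
    show L53.b (x + y) z = L53.b x z + L53.b y z
    funext i; fin_cases i <;> simp [L53.b, L53.add_apply] <;> ring
  lie_add x y z := by
    show L53.b x (y + z) = L53.b x y + L53.b x z
    funext i; fin_cases i <;> simp [L53.b, L53.add_apply] <;> ring
  lie_self x := by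
    show L53.b x x = 0
    funext i; fin_cases i <;> simp [L53.b] <;> ring
  leibniz_lie x y z := by
    show L53.b x (L53.b y z) = L53.b (L53.b x y) z + L53.b y (L53.b x z)
    funext i; fin_cases i <;> simp [L53.b, L53.add_apply] <;> ring

instance : LieAlgebra ℝ L53 where
  lie_smul t x y := by
    show L53.b x (t • y) = t • L53.b x y
    funext i; fin_cases i <;> simp [L53.b, L53.smul_apply] <;> ring

/-- The standard basis `e1, …, e5` of `L53` (indexed by `0, …, 4`). -/
def L53.e (i : Fin 5) : L53 := (Pi.single i 1 : Fin 5 → ℝ)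

/-- The dual basis `e^1, …, e^5` of `L53` (indexed by `0, …, 4`). -/
def L53.eps (i : Fin 5) : Module.Dual ℝ L53 where
  toFun x := x i
  map_add' _ _ := rfl
  map_smul' _ _ := rfl


/-- `1* ∈ g_ℝ*`, the projection onto the `ℝ`-summand of `g_ℝ = L53 ⊕ ℝ`. -/
def oneStar : Module.Dual ℝ (L53 × ℝ) := LinearMap.snd ℝ L53 ℝ

/-- `e^1, …, e^5`, extended by zero on the `ℝ`-summand of `g_ℝ = L53 ⊕ ℝ`. -/
def epsR (i : Fin 5) : Module.Dual ℝ (L53 × ℝ) :=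
  (L53.eps i).comp (LinearMap.fst ℝ L53 ℝ)

/-- The 2-form `ω = e^1 ∧ e^3 − 1* ∧ e^4` on `g_ℝ = L53 ⊕ ℝ`. -/
def ω : (L53 × ℝ) [⋀^Fin 2]→ₗ[ℝ] ℝ := wedge (oneForm (epsR 0)) (oneForm (epsR 2)) - wedge (oneForm oneStar) (oneForm (epsR 3))


open Equiv Nat

section Wedge

variable {R M : Type*} [CommRing R] [AddCommGroup M] [Module R M]

theorem factorial_mul_factorial_smul_wedge_apply {m n : ℕ} (α : M [⋀^Fin m]→ₗ[R] R)
    (β : M [⋀^Fin n]→ₗ[R] R) (v : Fin (m + n) → M) :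
    (m ! * n !) • wedge α β v = ∑ σ : Perm (Fin (m + n)), Perm.sign σ •
      (α (fun i => v (σ (Fin.castAdd n i))) * β (fun i => v (σ (Fin.natAdd m i)))) := by
  have key := congrArg (fun F => LinearMap.mul' R R (F (v ∘ finSumFinEquiv)))
    (MultilinearMap.domCoprod_alternization_eq α β)
  simp only [Fintype.card_fin, AlternatingMap.smul_apply, map_nsmul,
    MultilinearMap.alternatization_apply, map_sum] at key
  rw [wedge, LinearMap.compAlternatingMap_apply, AlternatingMap.domDomCongr_apply, ← key,
    ← (permCongr finSumFinEquiv).symm.sum_comp]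
  refine Finset.sum_congr rfl fun σ _ => ?_
  simp [Perm.sign_permCongr]

@[simp]
theorem oneForm_apply (f : M →ₗ[R] R) (v : Fin 1 → M) : oneForm f v = f (v 0) := rfl

theorem AlternatingMap.map_vecCons_swap (β : M [⋀^Fin 2]→ₗ[R] R) (x y : M) :
    β ![y, x] = -β ![x, y] := by
  rw [eq_neg_iff_add_eq_zero, ← β.map_swap_add (v := ![x, y]) (i := 0) (j := 1) (by decide)]
  congr 2
  ext i; fin_cases i <;> rfl

theorem wedge_oneForm_oneForm_apply (f g : M →ₗ[R] R) (v : Fin 2 → M) :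
    wedge (oneForm f) (oneForm g) v = f (v 0) * g (v 1) - f (v 1) * g (v 0) := by
  have h := factorial_mul_factorial_smul_wedge_apply (oneForm f) (oneForm g) v
  rw [show (Finset.univ : Finset (Perm (Fin 2))) = {1, swap 0 1} by decide,
    Finset.sum_pair (by decide)] at h
  simpa [sub_eq_add_neg] using h

theorem wedge_oneForm_apply [IsAddTorsionFree R] (f : M →ₗ[R] R) (β : M [⋀^Fin 2]→ₗ[R] R)
    (v : Fin 3 → M) :
    wedge (oneForm f) β v =
      f (v 0) * β ![v 1, v 2] - f (v 1) * β ![v 0, v 2] + f (v 2) * β ![v 0, v 1] := by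
  have h := factorial_mul_factorial_smul_wedge_apply (oneForm f) β v
  have hvec : ∀ σ : Perm (Fin 3),
      (fun i : Fin 2 => v (σ (Fin.natAdd 1 i))) = ![v (σ 1), v (σ 2)] :=
    fun σ => by ext i; fin_cases i <;> rfl
  simp only [hvec] at h
  rw [show (Finset.univ : Finset (Perm (Fin 3))) =
      {1, swap 0 1, swap 0 2, swap 1 2, swap 0 1 * swap 1 2, swap 1 2 * swap 0 1} by decide] at h
  rw [Finset.sum_insert (by decide), Finset.sum_insert (by decide), Finset.sum_insert (by decide),
    Finset.sum_insert (by decide), Finset.sum_pair (by decide)] at h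
  simp only [factorial_one, factorial_two, one_mul, reduceAdd, nsmul_eq_mul, cast_ofNat,
    Perm.sign_one, Perm.coe_one, id_eq, oneForm_apply, Fin.isValue, Fin.reduceCastAdd,
    succ_eq_add_one, one_smul, Perm.sign_swap', zero_ne_one, ↓reduceIte, swap_apply_def,
    Fin.reduceEq, Units.neg_smul, one_ne_zero, mul_neg, smul_neg, neg_neg, Perm.sign_mul, mul_one,
    Perm.coe_mul, Function.comp_apply, ite_eq_left_iff, not_true_eq_false, imp_self,
    β.map_vecCons_swap (v 0) (v 1), β.map_vecCons_swap (v 0) (v 2), β.map_vecCons_swap (v 1) (v 2)] at h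
  -- the permutation sum counts each of the three shuffles `1! * 2! = 2` times
  refine nsmul_right_injective two_ne_zero ?_
  linear_combination h

end Wedge

theorem IsCEDiff.apply_three {R W : Type*} [CommRing R] [LieRing W] [LieAlgebra R W]
    {d : (W [⋀^Fin 2]→ₗ[R] R) → (W [⋀^Fin 3]→ₗ[R] R)} (hd : IsCEDiff d)
    (α : W [⋀^Fin 2]→ₗ[R] R) (v : Fin 3 → W) :
    d α v = -α ![⁅v 0, v 1⁆, v 2] + α ![⁅v 0, v 2⁆, v 1] - α ![⁅v 1, v 2⁆, v 0] := by
  have hpairs : Finset.univ.filter (fun p : Fin 3 × Fin 3 => p.1 < p.2) =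
      {(0, 1), (0, 2), (1, 2)} := by
    decide
  have h01 : kosArg v 0 1 = ![⁅v 0, v 1⁆, v 2] := by ext k; fin_cases k <;> rfl
  have h02 : kosArg v 0 2 = ![⁅v 0, v 2⁆, v 1] := by ext k; fin_cases k <;> rfl
  have h12 : kosArg v 1 2 = ![⁅v 1, v 2⁆, v 0] := by ext k; fin_cases k <;> rfl
  rw [hd α v, hpairs, Finset.sum_insert (by decide), Finset.sum_pair (by decide), h01, h02, h12]
  simp only [reduceAdd, Fin.isValue, Fin.coe_ofNat_eq_mod, zero_mod, one_mod, zero_add, pow_one,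
    succ_eq_add_one, smul_eq_mul, neg_mul, one_mul, mod_succ, even_two, Even.neg_pow, one_pow]
  ring

theorem bracket_trivExt {R L : Type*} [CommRing R] [LieRing L] (x y : L × R) :
    ⁅x, y⁆ = (⁅x.1, y.1⁆, 0) := rfl

theorem L53.bracket_def (x y : L53) : ⁅x, y⁆ = L53.b x y := rfl

@[simp]
theorem epsR_apply (i : Fin 5) (x : L53 × ℝ) : epsR i x = x.1 i := rfl

@[simp]
theorem oneStar_apply (x : L53 × ℝ) : oneStar x = x.2 := rfl

theorem ω_apply_vecCons (x y : L53 × ℝ) :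
    ω ![x, y] = x.1 0 * y.1 2 - y.1 0 * x.1 2 - (x.2 * y.1 3 - y.2 * x.1 3) := by
  simp [ω, wedge_oneForm_oneForm_apply]

/-- Let `g = L_{5,3}` (nonzero brackets `[e1,e2]=e3`, `[e1,e3]=e4`) and
let `g_ℝ = g ⊕ ℝ` with bracket `[(ξ,r),(η,k)] = ([ξ,η],0)`, with `1* ∈ g_ℝ*` the
projection onto the `ℝ`-summand and `e^1,…,e^5` the dual basis of `g*` (extended by zero
on the `ℝ`-summand). Then the 2-form `ω := e^1 ∧ e^3 − 1* ∧ e^4 ∈ Λ² g_ℝ*` satisfies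
`Dω = 0`, where `D = δ + 1*∧` and `δ` is the Chevalley–Eilenberg differential of `g_ℝ`
(given by the Koszul formula, i.e. any `δ` with `IsCEDiff δ`). -/
theorem Domega_eq_zero_L53
    (δ : ((L53 × ℝ) [⋀^Fin 2]→ₗ[ℝ] ℝ) → ((L53 × ℝ) [⋀^Fin 3]→ₗ[ℝ] ℝ))
    (hδ : IsCEDiff δ) :
    δ ω + wedge (oneForm oneStar) ω = 0 := by
  ext v
  rw [AlternatingMap.add_apply, hδ.apply_three, wedge_oneForm_apply]
  simp only [Fin.isValue, bracket_trivExt, L53.bracket_def, L53.b, ω_apply_vecCons,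
    Matrix.cons_val_zero, Matrix.cons_val, oneStar_apply, AlternatingMap.zero_apply]
  ring

end
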